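/- For every (α,β,γ) ∈ K^* × K^2, the formulas v_k·e1 = β q^{-2k} v_k - q^{-2(k-1)} (((q^{2k}-1)(q^{2(k-1)}-1))/((q^4-1)(q^2-1))) α v_{k-2} for 2 ≤ k ≤ l-1 and v_k·e1 = β q^{-2k} v_k for k = 0,1; v_k·e2 = v_{k+1} for 0 ≤ k ≤ l-2 and v_{l-1}·e2 = γ v_0; v_k·e3 = α ((q^{2k}-1)/(q^2-1)) v_{k-1} for 1 ≤ k ≤ l-1 and v_0·e3 = 0; v_k·z = α v_k, define a right U_q^+(B_2)-module structure on the K-vector space with basis v_0,…,v_{l-1}, and the resulting module V'_4(α,β,γ) is a simple U_q^+(B_2)-module of K-dimension l. -/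

import Mathlib

noncomputable section

open MulOpposite

/-- The defining relations of `U_q^+(B_2)` on the free algebra on generators
`e1 = ι 0`, `e2 = ι 1`, `e3 = ι 2`, `z = ι 3`. -/
inductive UqB2Rel (K : Type*) [Field K] (q : K) :
    FreeAlgebra K (Fin 4) → FreeAlgebra K (Fin 4) → Prop
  | e1z : UqB2Rel K q (FreeAlgebra.ι K 0 * FreeAlgebra.ι K 3)
      (FreeAlgebra.ι K 3 * FreeAlgebra.ι K 0)
  | e2z : UqB2Rel K q (FreeAlgebra.ι K 1 * FreeAlgebra.ι K 3)
      (FreeAlgebra.ι K 3 * FreeAlgebra.ι K 1)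
  | e3z : UqB2Rel K q (FreeAlgebra.ι K 2 * FreeAlgebra.ι K 3)
      (FreeAlgebra.ι K 3 * FreeAlgebra.ι K 2)
  | e1e3 : UqB2Rel K q (FreeAlgebra.ι K 0 * FreeAlgebra.ι K 2)
      (q⁻¹ ^ 2 • (FreeAlgebra.ι K 2 * FreeAlgebra.ι K 0))
  | e2e3 : UqB2Rel K q (FreeAlgebra.ι K 1 * FreeAlgebra.ι K 2)
      (q ^ 2 • (FreeAlgebra.ι K 2 * FreeAlgebra.ι K 1) + FreeAlgebra.ι K 3)
  | e2e1 : UqB2Rel K q (FreeAlgebra.ι K 1 * FreeAlgebra.ι K 0)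
      (q⁻¹ ^ 2 • (FreeAlgebra.ι K 0 * FreeAlgebra.ι K 1) - q⁻¹ ^ 2 • FreeAlgebra.ι K 2)

/-- `U_q^+(B_2)`, presented by generators `e1, e2, e3, z` and the relations above. -/
abbrev UqB2 (K : Type*) [Field K] (q : K) : Type _ := RingQuot (UqB2Rel K q)

variable (K : Type*) [Field K] (q : K)

/-- The generator `e1` of `U_q^+(B_2)`. -/
def Ue1 : UqB2 K q := RingQuot.mkAlgHom K (UqB2Rel K q) (FreeAlgebra.ι K 0)
/-- The generator `e2` of `U_q^+(B_2)`. -/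
def Ue2 : UqB2 K q := RingQuot.mkAlgHom K (UqB2Rel K q) (FreeAlgebra.ι K 1)
/-- The generator `e3` of `U_q^+(B_2)`. -/
def Ue3 : UqB2 K q := RingQuot.mkAlgHom K (UqB2Rel K q) (FreeAlgebra.ι K 2)
/-- The generator `z` of `U_q^+(B_2)`. -/
def Uz : UqB2 K q := RingQuot.mkAlgHom K (UqB2Rel K q) (FreeAlgebra.ι K 3)

/-!
Put `ω = q ^ 2`, a primitive `l`-th root of unity, and index the basis `v_k` by the cyclic group
`Fin l`, on which `k ↦ ω ^ k` is well defined. Then `e3` lowers `v_k` with coefficient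
`α [k]_ω = α (ω ^ k - 1) / (ω - 1)`, `e2` raises it, `e1` is diagonal plus a lowering by two, and
`z` acts by `α`. Coordinatewise, each defining relation becomes an identity between these
coefficients, such as `[k + 1]_ω = ω [k]_ω + 1`. The parameter `γ` of the wrap-around
`v_{l-1}·e2 = γ v_0` never enters, because it always multiplies a vanishing coefficient.

For simplicity: `[k]_ω ≠ 0` for `0 < k < l`, so `e3` is nilpotent with kernel `K v_0`. Hence every
nonzero invariant subspace contains `v_0`, and repeated application of `e2` then yields every `v_k`.
-/

namespace UqB2

variable {A : Type*} [Ring A] [Algebra K A] (a b c d : A)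

def lift (had : a * d = d * a) (hbd : b * d = d * b) (hcd : c * d = d * c)
    (hac : a * c = q⁻¹ ^ 2 • (c * a)) (hbc : b * c = q ^ 2 • (c * b) + d)
    (hba : b * a = q⁻¹ ^ 2 • (a * b) - q⁻¹ ^ 2 • c) : UqB2 K q →ₐ[K] A :=
  RingQuot.liftAlgHom K ⟨FreeAlgebra.lift K ![a, b, c, d], by
    rintro _ _ ⟨⟩ <;>
      simpa only [map_mul, map_add, map_sub, map_smul, FreeAlgebra.lift_ι_apply] using ‹_›⟩

variable {a b c d} {had : a * d = d * a} {hbd : b * d = d * b} {hcd : c * d = d * c}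
    {hac : a * c = q⁻¹ ^ 2 • (c * a)} {hbc : b * c = q ^ 2 • (c * b) + d}
    {hba : b * a = q⁻¹ ^ 2 • (a * b) - q⁻¹ ^ 2 • c}

@[simp] lemma lift_e1 : lift K q a b c d had hbd hcd hac hbc hba (Ue1 K q) = a := by
  simp [lift, Ue1]

@[simp] lemma lift_e2 : lift K q a b c d had hbd hcd hac hbc hba (Ue2 K q) = b := by
  simp [lift, Ue2]

@[simp] lemma lift_e3 : lift K q a b c d had hbd hcd hac hbc hba (Ue3 K q) = c := by
  simp [lift, Ue3]

@[simp] lemma lift_z : lift K q a b c d had hbd hcd hac hbc hba (Uz K q) = d := by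
  simp [lift, Uz]

end UqB2

section WeightedShift

variable {R G : Type*} [CommSemiring R] [AddGroup G]

def weightedShift (s : G) (a : G → R) : Module.End R (G → R) where
  toFun v j := a j * v (j + s)
  map_add' u v := funext fun j => mul_add (a j) (u (j + s)) (v (j + s))
  map_smul' c v := funext fun j => mul_left_comm (a j) c (v (j + s))

@[simp] lemma weightedShift_apply (s : G) (a : G → R) (v : G → R) (j : G) :
    weightedShift s a v j = a j * v (j + s) := rfl

lemma weightedShift_single [DecidableEq G] (s : G) (a : G → R) (k : G) (c : R) :
    weightedShift s a (Pi.single k c) = Pi.single (k - s) (a (k - s) * c) := by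
  ext j
  rcases eq_or_ne j (k - s) with rfl | hj
  · simp
  · simp [hj, ← eq_sub_iff_add_eq]

end WeightedShift

section PowVal

variable {M : Type*} {l : ℕ}

lemma pow_val_add [Monoid M] {ω : M} (h : ω ^ l = 1) (j k : Fin l) :
    ω ^ ((j + k : Fin l) : ℕ) = ω ^ (j : ℕ) * ω ^ (k : ℕ) := by
  rw [Fin.val_add, ← pow_eq_pow_mod _ h, pow_add]

lemma pow_val_one [NeZero l] [Monoid M] {ω : M} (h : ω ^ l = 1) : ω ^ ((1 : Fin l) : ℕ) = ω := by
  rw [Fin.val_one', ← pow_eq_pow_mod _ h, pow_one]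

end PowVal

section Fin

variable {l : ℕ} [NeZero l]

lemma Fin.add_one_eq_zero_iff (k : Fin l) : k + 1 = 0 ↔ (k : ℕ) + 1 = l := by
  rw [Fin.ext_iff, Fin.val_add, Fin.val_one', Nat.add_mod_mod, Fin.val_zero]
  refine ⟨fun h => ?_, fun h => by rw [h, Nat.mod_self]⟩
  by_contra hne
  rw [Nat.mod_eq_of_lt (by omega)] at h
  omega

lemma Fin.add_one_eq_mk {k : Fin l} (hk : (k : ℕ) + 1 < l) : k + 1 = ⟨k + 1, hk⟩ :=
  Fin.ext (Fin.val_add_one_of_lt' hk)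

lemma Fin.sub_one_eq_mk {k : Fin l} (hk : 0 < (k : ℕ)) : k - 1 = ⟨(k : ℕ) - 1, by omega⟩ :=
  Fin.ext (Fin.val_sub_one_of_ne_zero (Fin.ne_of_val_ne hk.ne'))

lemma Fin.sub_one_sub_one_eq_mk {k : Fin l} (hk : 2 ≤ (k : ℕ)) :
    k - 1 - 1 = ⟨(k : ℕ) - 2, by omega⟩ := by
  rw [Fin.sub_one_eq_mk (k := k) (by omega), Fin.sub_one_eq_mk (by dsimp only; omega)]
  exact Fin.ext (by dsimp only; omega)

end Fin

theorem IsPrimitiveRoot.sq {M : Type*} [CommMonoid M] {ζ : M} {m : ℕ} (h : IsPrimitiveRoot ζ m) :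
    IsPrimitiveRoot (ζ ^ 2) (if Odd m then m else m / 2) := by
  split_ifs with hm
  · exact h.pow_of_coprime 2 (Nat.coprime_two_left.mpr hm)
  · exact h.pow_of_dvd two_ne_zero (Nat.not_odd_iff_even.mp hm).two_dvd

section Simple

variable {F : Type*} [Field F] {l : ℕ} [NeZero l] {W : Submodule F (Fin l → F)}

lemma eq_single_zero_of_weightedShift_one_eq_zero {a : Fin l → F}
    (ha : ∀ j, j + 1 ≠ 0 → a j ≠ 0) {v : Fin l → F} (hv : weightedShift 1 a v = 0) :
    v = Pi.single 0 (v 0) := by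
  funext j
  rcases eq_or_ne j 0 with rfl | hj
  · simp
  have hj' : j - 1 + 1 ≠ 0 := by rwa [sub_add_cancel]
  have h := congrFun hv (j - 1)
  rw [weightedShift_apply, sub_add_cancel, Pi.zero_apply] at h
  simp [hj, (mul_eq_zero.mp h).resolve_left (ha _ hj')]

lemma single_zero_mem_of_lowering {a : Fin l → F} (ha : ∀ j, a j = 0 ↔ j + 1 = 0)
    (hW : ∀ v ∈ W, weightedShift 1 a v ∈ W) (hW0 : W ≠ ⊥) : Pi.single 0 1 ∈ W := by
  -- induction on a strict bound `n` for the support of `v`, which `weightedShift 1 a` lowers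
  suffices key : ∀ n : ℕ, ∀ v ∈ W, v ≠ 0 → (∀ j : Fin l, n ≤ j → v j = 0) →
      Pi.single 0 1 ∈ W by
    obtain ⟨v, hvW, hv⟩ := (Submodule.ne_bot_iff W).mp hW0
    exact key l v hvW hv fun j hj => absurd j.isLt (by omega)
  intro n
  induction n with
  | zero =>
    intro v _ hv hsupp
    exact absurd (funext fun j => hsupp j (Nat.zero_le _)) hv
  | succ n ih =>
    intro v hvW hv hsupp
    by_cases hker : weightedShift 1 a v = 0
    · obtain ⟨c, rfl⟩ : ∃ c, v = Pi.single 0 c :=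
        ⟨_, eq_single_zero_of_weightedShift_one_eq_zero (fun j hj => (ha j).not.mpr hj) hker⟩
      have hc : c ≠ 0 := by rintro rfl; exact hv (Pi.single_zero 0)
      have h := W.smul_mem c⁻¹ hvW
      rwa [← Pi.single_smul', smul_eq_mul, inv_mul_cancel₀ hc] at h
    refine ih _ (hW v hvW) hker fun j hj => ?_
    rw [weightedShift_apply]
    by_cases hj1 : j + 1 = 0
    · rw [(ha j).mpr hj1, zero_mul]
    · have hjl : (j : ℕ) + 1 ≠ l := (Fin.add_one_eq_zero_iff j).not.mp hj1
      rw [hsupp (j + 1) (by rw [Fin.val_add_one_of_lt' (by omega)]; omega), mul_zero]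

lemma eq_top_of_raising {a : Fin l → F} (ha : ∀ j, j ≠ 0 → a j ≠ 0)
    (hW : ∀ v ∈ W, weightedShift (-1) a v ∈ W) (h0 : Pi.single 0 1 ∈ W) : W = ⊤ := by
  have hsingle : ∀ n (hn : n < l), Pi.single (⟨n, hn⟩ : Fin l) (1 : F) ∈ W := by
    intro n
    induction n with
    | zero => exact fun _ => h0
    | succ n ih =>
      intro hn
      have hk : (⟨n, by omega⟩ : Fin l) - -1 = ⟨n + 1, hn⟩ := by
        rw [sub_neg_eq_add]
        exact Fin.add_one_eq_mk hn
      have h := W.smul_mem (a ⟨n + 1, hn⟩)⁻¹ (hW _ (ih (by omega)))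
      rwa [weightedShift_single, hk, ← Pi.single_smul', smul_eq_mul, mul_one,
        inv_mul_cancel₀ (ha _ (Fin.ne_of_val_ne (by simp)))] at h
  rw [eq_top_iff, ← (Pi.basisFun F (Fin l)).span_eq, Submodule.span_le]
  rintro _ ⟨k, rfl⟩
  simpa using hsingle k k.isLt

end Simple

namespace V4'

variable {F : Type*} [Field F] {l : ℕ} [NeZero l] (ω α β γ : F)

def e1Diag (k : Fin l) : F := β * (ω ^ (k : ℕ))⁻¹

def e1Sub (k : Fin l) : F :=
  α * (ω ^ ((k - 1 : Fin l) : ℕ))⁻¹ *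
    ((ω ^ (k : ℕ) - 1) * (ω ^ ((k - 1 : Fin l) : ℕ) - 1) / ((ω ^ 2 - 1) * (ω - 1)))

def e2Coeff (k : Fin l) : F := if k + 1 = 0 then γ else 1

def e3Coeff (k : Fin l) : F := α * ((ω ^ (k : ℕ) - 1) / (ω - 1))

-- `v_k` is `Pi.single k 1`, which `weightedShift s a` sends to `a (k - s) • v_(k - s)`; so for
-- `ω = q ^ 2` these are the operators of the paper, written in coordinates.
variable (l) in
def e1Op : Module.End F (Fin l → F) :=
  weightedShift 0 (e1Diag ω β) - weightedShift (1 + 1) fun j => e1Sub ω α (j + 1 + 1)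

variable (l) in
def e2Op : Module.End F (Fin l → F) := weightedShift (-1) fun j => e2Coeff γ (j - 1)

variable (l) in
def e3Op : Module.End F (Fin l → F) := weightedShift 1 fun j => e3Coeff ω α (j + 1)

@[simp] lemma e3Coeff_zero : e3Coeff ω α (0 : Fin l) = 0 := by simp [e3Coeff]

@[simp] lemma e1Sub_zero : e1Sub ω α (0 : Fin l) = 0 := by simp [e1Sub]

@[simp] lemma e1Sub_one : e1Sub ω α (1 : Fin l) = 0 := by simp [e1Sub]

variable {ω γ}

lemma e2Coeff_of_add_one_eq_zero {k : Fin l} (h : k + 1 = 0) : e2Coeff γ k = γ := if_pos h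

lemma e2Coeff_of_add_one_ne_zero {k : Fin l} (h : k + 1 ≠ 0) : e2Coeff γ k = 1 := if_neg h

lemma e2Coeff_mul_of_eq_zero {k : Fin l} {x : F} (h : k + 1 = 0 → x = 0) :
    e2Coeff γ k * x = x := by
  unfold e2Coeff
  split_ifs with hk
  · simp [h hk]
  · exact one_mul x

lemma e1Sub_eq_zero_of_val_lt_two {k : Fin l} (hk : (k : ℕ) < 2) : e1Sub ω α k = 0 := by
  obtain h | h : (k : ℕ) = 0 ∨ ((k - 1 : Fin l) : ℕ) = 0 := by
    by_cases hk0 : (k : ℕ) = 0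
    · exact .inl hk0
    · exact .inr (by rw [Fin.val_sub_one_of_ne_zero (Fin.ne_of_val_ne hk0)]; omega)
  all_goals simp [e1Sub, h]

section Identities

variable (hωl : ω ^ l = 1) (hω1 : ω ≠ 1) (hω2 : ω ^ 2 ≠ 1)
include hωl

lemma e1Diag_add_one (k : Fin l) : e1Diag ω β (k + 1) = ω⁻¹ * e1Diag ω β k := by
  simp only [e1Diag, pow_val_add hωl, pow_val_one hωl, mul_inv]
  ring

lemma e3Coeff_mul_e1Sub (k : Fin l) :
    e3Coeff ω α k * e1Sub ω α (k + 1 + 1) =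
      ω⁻¹ * (e1Sub ω α (k + 1) * e3Coeff ω α (k + 1 + 1)) := by
  have hx : ω ^ (k : ℕ) ≠ 0 := pow_ne_zero _ (IsUnit.of_pow_eq_one hωl (NeZero.ne l)).ne_zero
  simp only [e1Sub, e3Coeff, add_sub_cancel_right, pow_val_add hωl, pow_val_one hωl]
  field_simp

include hω1

lemma e3Coeff_add_one (k : Fin l) : e3Coeff ω α (k + 1) = ω * e3Coeff ω α k + α := by
  have : ω - 1 ≠ 0 := sub_ne_zero.mpr hω1
  simp only [e3Coeff, pow_val_add hωl, pow_val_one hωl]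
  field_simp
  ring

include hω2

lemma e1Sub_add_one_add_one (k : Fin l) :
    e1Sub ω α (k + 1 + 1) = ω⁻¹ * (e1Sub ω α (k + 1) + e3Coeff ω α (k + 1)) := by
  have hω0 : ω ≠ 0 := (IsUnit.of_pow_eq_one hωl (NeZero.ne l)).ne_zero
  have hx : ω ^ (k : ℕ) ≠ 0 := pow_ne_zero _ hω0
  have h1 : ω - 1 ≠ 0 := sub_ne_zero.mpr hω1
  have h2 : ω ^ 2 - 1 ≠ 0 := sub_ne_zero.mpr hω2
  simp only [e1Sub, e3Coeff, add_sub_cancel_right, pow_val_add hωl, pow_val_one hωl]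
  field_simp
  ring

end Identities

section Relations

variable (hωl : ω ^ l = 1) (hω1 : ω ≠ 1) (hω2 : ω ^ 2 ≠ 1)
include hωl

lemma e3Op_mul_e1Op : e3Op l ω α * e1Op l ω α β = ω⁻¹ • (e1Op l ω α β * e3Op l ω α) := by
  refine LinearMap.ext fun v => funext fun j => ?_
  simp only [e1Op, e3Op, Module.End.mul_apply, LinearMap.sub_apply, LinearMap.smul_apply,
    Pi.sub_apply, Pi.smul_apply, smul_eq_mul, weightedShift_apply, add_zero, ← add_assoc]
  linear_combination v (j + 1) * e3Coeff ω α (j + 1) * e1Diag_add_one β hωl j -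
    v (j + 1 + 1 + 1) * e3Coeff_mul_e1Sub α hωl (j + 1)

include hω1

lemma e3Op_mul_e2Op : e3Op l ω α * e2Op l γ = ω • (e2Op l γ * e3Op l ω α) + algebraMap F _ α := by
  refine LinearMap.ext fun v => funext fun j => ?_
  simp only [e2Op, e3Op, Module.End.mul_apply, LinearMap.add_apply, LinearMap.smul_apply,
    Module.algebraMap_end_apply, Pi.add_apply, Pi.smul_apply, smul_eq_mul, weightedShift_apply,
    add_sub_cancel_right, ← sub_eq_add_neg, sub_add_cancel]
  have ht : e2Coeff γ j * e3Coeff ω α (j + 1) = e3Coeff ω α (j + 1) :=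
    e2Coeff_mul_of_eq_zero fun h => by rw [h, e3Coeff_zero]
  have ht' : e2Coeff γ (j - 1) * e3Coeff ω α j = e3Coeff ω α j :=
    e2Coeff_mul_of_eq_zero fun h => by rw [sub_add_cancel] at h; rw [h, e3Coeff_zero]
  linear_combination v j * (ht - ω * ht' + e3Coeff_add_one α hωl hω1 j)

include hω2

lemma e1Op_mul_e2Op :
    e1Op l ω α β * e2Op l γ = ω⁻¹ • (e2Op l γ * e1Op l ω α β) - ω⁻¹ • e3Op l ω α := by
  refine LinearMap.ext fun v => funext fun j => ?_
  simp only [e1Op, e2Op, e3Op, Module.End.mul_apply, LinearMap.sub_apply, LinearMap.smul_apply,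
    Pi.sub_apply, Pi.smul_apply, smul_eq_mul, weightedShift_apply, add_zero, ← add_assoc,
    ← sub_eq_add_neg, add_sub_cancel_right, sub_add_cancel]
  have hd : e1Diag ω β j = ω⁻¹ * e1Diag ω β (j - 1) := by
    simpa only [sub_add_cancel] using e1Diag_add_one β hωl (j - 1)
  have ht : e2Coeff γ (j + 1) * e1Sub ω α (j + 1 + 1) = e1Sub ω α (j + 1 + 1) :=
    e2Coeff_mul_of_eq_zero fun h => by rw [h, e1Sub_zero]
  have ht' : e2Coeff γ (j - 1) * e1Sub ω α (j + 1) = e1Sub ω α (j + 1) :=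
    e2Coeff_mul_of_eq_zero fun h => by rw [sub_add_cancel] at h; rw [h, zero_add, e1Sub_one]
  linear_combination v (j - 1) * e2Coeff γ (j - 1) * hd -
    v (j + 1) * (ht - ω⁻¹ * ht' + e1Sub_add_one_add_one α hωl hω1 hω2 j)

end Relations

variable (l)

lemma e1Op_single (k : Fin l) :
    e1Op l ω α β (Pi.single k 1) =
      e1Diag ω β k • Pi.single k 1 - e1Sub ω α k • Pi.single (k - 1 - 1) 1 := by
  rw [e1Op, LinearMap.sub_apply, weightedShift_single, weightedShift_single, sub_zero, ← sub_sub,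
    sub_add_cancel, sub_add_cancel, mul_one, mul_one, ← Pi.single_smul', ← Pi.single_smul',
    smul_eq_mul, smul_eq_mul, mul_one, mul_one]

lemma e2Op_single (k : Fin l) : e2Op l γ (Pi.single k 1) = e2Coeff γ k • Pi.single (k + 1) 1 := by
  simp only [e2Op, weightedShift_single, sub_neg_eq_add, add_sub_cancel_right,
    ← Pi.single_smul', smul_eq_mul, mul_one]

lemma e3Op_single (k : Fin l) :
    e3Op l ω α (Pi.single k 1) = e3Coeff ω α k • Pi.single (k - 1) 1 := by
  simp only [e3Op, weightedShift_single, sub_add_cancel, ← Pi.single_smul', smul_eq_mul, mul_one]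

variable {l}

lemma e3Coeff_eq_zero_iff (hprim : IsPrimitiveRoot ω l) (hω1 : ω ≠ 1) (hα : α ≠ 0) (k : Fin l) :
    e3Coeff ω α k = 0 ↔ k = 0 := by
  rw [e3Coeff, mul_eq_zero, div_eq_zero_iff, sub_eq_zero, sub_eq_zero, or_iff_left hω1,
    or_iff_right hα, hprim.pow_eq_one_iff_dvd, Fin.ext_iff, Fin.val_zero]
  exact ⟨fun h => Nat.eq_zero_of_dvd_of_lt h k.isLt, fun h => h ▸ dvd_zero l⟩

lemma eq_bot_or_eq_top (hprim : IsPrimitiveRoot ω l) (hω1 : ω ≠ 1) (hα : α ≠ 0)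
    (W : Submodule F (Fin l → F)) (h2 : ∀ v ∈ W, e2Op l γ v ∈ W) (h3 : ∀ v ∈ W, e3Op l ω α v ∈ W) :
    W = ⊥ ∨ W = ⊤ := by
  refine or_iff_not_imp_left.mpr fun hW0 => eq_top_of_raising (fun j hj => ?_) h2
    (single_zero_mem_of_lowering (fun j => e3Coeff_eq_zero_iff α hprim hω1 hα _) h3 hW0)
  rw [e2Coeff_of_add_one_ne_zero (by rwa [sub_add_cancel])]
  exact one_ne_zero

section Representation

variable (l : ℕ) [NeZero l] (α β γ : K)

-- A right action is an algebra map into the opposite of `End`, so each relation `x * y = …`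
-- is checked as `E_y * E_x = …`.
def rep (hprim : IsPrimitiveRoot (q ^ 2) l) (hl : 3 ≤ l) :
    UqB2 K q →ₐ[K] (Module.End K (Fin l → K))ᵐᵒᵖ :=
  have hωl := hprim.pow_eq_one
  have hω1 : q ^ 2 ≠ 1 := hprim.ne_one (by omega)
  have hω2 : (q ^ 2) ^ 2 ≠ 1 := hprim.pow_ne_one_of_pos_of_lt two_ne_zero (by omega)
  UqB2.lift K q (op (e1Op l (q ^ 2) α β)) (op (e2Op l γ)) (op (e3Op l (q ^ 2) α))
    (algebraMap K _ α) (Algebra.commutes α _).symm (Algebra.commutes α _).symm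
    (Algebra.commutes α _).symm
    (by rw [← op_mul, ← op_mul, e3Op_mul_e1Op α β hωl, op_smul, inv_pow])
    (by rw [← op_mul, ← op_mul, e3Op_mul_e2Op α hωl hω1, op_add, op_smul,
      MulOpposite.algebraMap_apply])
    (by rw [← op_mul, ← op_mul, e1Op_mul_e2Op α β hωl hω1 hω2, op_sub, op_smul, op_smul, inv_pow])

variable {l q} {hprim : IsPrimitiveRoot (q ^ 2) l} {hl : 3 ≤ l}

@[simp] lemma rep_e1 : (rep K q l α β γ hprim hl (Ue1 K q)).unop = e1Op l (q ^ 2) α β := by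
  simp [rep]

@[simp] lemma rep_e2 : (rep K q l α β γ hprim hl (Ue2 K q)).unop = e2Op l γ := by
  simp [rep]

@[simp] lemma rep_e3 : (rep K q l α β γ hprim hl (Ue3 K q)).unop = e3Op l (q ^ 2) α := by
  simp [rep]

@[simp] lemma rep_z : (rep K q l α β γ hprim hl (Uz K q)).unop = algebraMap K _ α := by
  simp [rep]

end Representation

end V4'

/-- For `(α,β,γ) ∈ K^* × K^2`, the formulas
`v_k·e1 = β q^{-2k} v_k - q^{-2(k-1)} (((q^{2k}-1)(q^{2(k-1)}-1))/((q^4-1)(q^2-1))) α v_{k-2}`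
(for `k ≥ 2`), `v_k·e1 = β q^{-2k} v_k` (for `k = 0,1`), `v_k·e2 = v_{k+1}` (for `k ≤ l-2`),
`v_{l-1}·e2 = γ v_0`, `v_k·e3 = α ((q^{2k}-1)/(q^2-1)) v_{k-1}` (for `k ≥ 1`), `v_0·e3 = 0`,
`v_k·z = α v_k` define a right `U_q^+(B_2)`-module structure on the `K`-vector space with
basis `v_0, …, v_{l-1}`, and the resulting module `V'_4(α,β,γ)` is simple of dimension `l`. -/
theorem stmt14 (m : ℕ) (hm : 5 ≤ m) (hq : IsPrimitiveRoot q m)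
    (l : ℕ) (hl : l = if Odd m then m else m / 2)
    (α β γ : K) (hα : α ≠ 0) :
    ∃ ρ : UqB2 K q →ₐ[K] (Module.End K (Fin l → K))ᵐᵒᵖ,
      (∀ k : Fin l, 2 ≤ (k : ℕ) → (ρ (Ue1 K q)).unop (Pi.single k 1) =
        (β * q⁻¹ ^ (2 * (k : ℕ))) • (Pi.single k 1 : Fin l → K) -
          (q⁻¹ ^ (2 * ((k : ℕ) - 1)) *
            ((q ^ (2 * (k : ℕ)) - 1) * (q ^ (2 * ((k : ℕ) - 1)) - 1) /
              ((q ^ 4 - 1) * (q ^ 2 - 1))) * α) •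
            (Pi.single (⟨(k : ℕ) - 2, Nat.lt_of_le_of_lt (Nat.sub_le _ _) k.isLt⟩ : Fin l) 1 :
              Fin l → K)) ∧
      (∀ k : Fin l, (k : ℕ) < 2 → (ρ (Ue1 K q)).unop (Pi.single k 1) =
        (β * q⁻¹ ^ (2 * (k : ℕ))) • (Pi.single k 1 : Fin l → K)) ∧
      (∀ k : Fin l, ∀ hk : (k : ℕ) + 1 < l, (ρ (Ue2 K q)).unop (Pi.single k 1) =
        (Pi.single (⟨(k : ℕ) + 1, hk⟩ : Fin l) 1 : Fin l → K)) ∧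
      (∀ k : Fin l, (k : ℕ) + 1 = l → (ρ (Ue2 K q)).unop (Pi.single k 1) =
        γ • (Pi.single (⟨0, k.pos⟩ : Fin l) 1 : Fin l → K)) ∧
      (∀ k : Fin l, 0 < (k : ℕ) → (ρ (Ue3 K q)).unop (Pi.single k 1) =
        (α * ((q ^ (2 * (k : ℕ)) - 1) / (q ^ 2 - 1))) •
          (Pi.single (⟨(k : ℕ) - 1, Nat.lt_of_le_of_lt (Nat.sub_le _ _) k.isLt⟩ : Fin l) 1 :
            Fin l → K)) ∧
      (∀ k : Fin l, (k : ℕ) = 0 → (ρ (Ue3 K q)).unop (Pi.single k 1) = 0) ∧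
      (∀ k : Fin l, (ρ (Uz K q)).unop (Pi.single k 1) = α • (Pi.single k 1 : Fin l → K)) ∧
      Nontrivial (Fin l → K) ∧
      (∀ W : Submodule K (Fin l → K),
        (∀ u : UqB2 K q, ∀ v ∈ W, (ρ u).unop v ∈ W) → W = ⊥ ∨ W = ⊤) ∧
      Module.finrank K (Fin l → K) = l := by
  have hl3 : 3 ≤ l := by subst hl; split_ifs with h <;> rw [Nat.odd_iff] at h <;> omega
  have : NeZero l := ⟨by omega⟩
  have hprim : IsPrimitiveRoot (q ^ 2) l := hl ▸ hq.sq
  refine ⟨V4'.rep K q l α β γ hprim hl3, fun k hk => ?_, fun k hk => ?_, fun k hk => ?_,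
    fun k hk => ?_, fun k hk => ?_, fun k hk => ?_, fun k => ?_, inferInstance, fun W hW => ?_,
    Module.finrank_fin_fun K⟩
  · rw [V4'.rep_e1, V4'.e1Op_single, Fin.sub_one_sub_one_eq_mk hk, V4'.e1Sub, V4'.e1Diag,
      Fin.sub_one_eq_mk (by omega)]
    simp only [inv_pow, ← pow_mul]
    ring_nf
  · rw [V4'.rep_e1, V4'.e1Op_single, V4'.e1Sub_eq_zero_of_val_lt_two α hk, zero_smul, sub_zero,
      V4'.e1Diag, inv_pow, ← pow_mul]
  · rw [V4'.rep_e2, V4'.e2Op_single, Fin.add_one_eq_mk hk,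
      V4'.e2Coeff_of_add_one_ne_zero ((Fin.add_one_eq_zero_iff k).not.mpr (by omega)), one_smul]
  · rw [V4'.rep_e2, V4'.e2Op_single, (Fin.add_one_eq_zero_iff k).mpr hk,
      V4'.e2Coeff_of_add_one_eq_zero ((Fin.add_one_eq_zero_iff k).mpr hk)]
    rfl
  · rw [V4'.rep_e3, V4'.e3Op_single, Fin.sub_one_eq_mk hk, V4'.e3Coeff, pow_mul]
  · obtain rfl : k = 0 := Fin.ext hk
    rw [V4'.rep_e3, V4'.e3Op_single, V4'.e3Coeff_zero, zero_smul]
  · simp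
  · exact V4'.eq_bot_or_eq_top α hprim (hprim.ne_one (by omega)) hα W
      (fun v hv => by simpa using hW (Ue2 K q) v hv) (fun v hv => by simpa using hW (Ue3 K q) v hv)
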